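/- With b = 2c > 0, the maximizer Δ*(c) = 1/(1 + c + √(c(2+c))) of θ(Δ) = R·Δ·exp(-a - 2c·Δ/(1-Δ)) is strictly decreasing in c, and the corresponding maximum throughput θ(Δ*(c)) is strictly decreasing in c. -/

import Mathlib

open Set

/-
Write Δ*(c) = 1/(1 + c + √(c(2+c))). Since √(c(2+c)) = c·√(1 + 2/c) for c > 0, the exponent
2cΔ*/(1 - Δ*) simplifies to 2/(1 + √(1 + 2/c)), which increases with c. Hence the throughput
R·Δ*(c)·exp(-a - 2/(1 + √(1 + 2/c))) is a product of two positive decreasing factors, the first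
strictly so.
-/

noncomputable def optimalDuty (c : ℝ) : ℝ := 1 / (1 + c + √(c * (2 + c)))

lemma optimalDuty_pos {c : ℝ} (hc : 0 ≤ c) : 0 < optimalDuty c := by
  unfold optimalDuty
  positivity

lemma strictMonoOn_sqrt_mul_two_add : StrictMonoOn (fun c : ℝ => √(c * (2 + c))) (Ici 0) :=
  fun x hx _ _ hxy =>
    Real.sqrt_lt_sqrt (by nlinarith [mem_Ici.mp hx]) (by nlinarith [mem_Ici.mp hx])

lemma optimalDuty_strictAntiOn : StrictAntiOn optimalDuty (Ici 0) := fun x hx y hy hxy =>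
  one_div_lt_one_div_of_lt (by positivity [mem_Ici.mp hx])
    (by linarith [strictMonoOn_sqrt_mul_two_add hx hy hxy])

lemma sqrt_mul_two_add_eq {c : ℝ} (hc : 0 < c) : √(c * (2 + c)) = c * √(1 + 2 / c) := by
  rw [show c * (2 + c) = c ^ 2 * (1 + 2 / c) by field_simp; ring,
    Real.sqrt_mul (sq_nonneg c), Real.sqrt_sq hc.le]

lemma two_mul_optimalDuty_div_one_sub {c : ℝ} (hc : 0 < c) :
    2 * c * optimalDuty c / (1 - optimalDuty c) = 2 / (1 + √(1 + 2 / c)) := by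
  rw [optimalDuty, sqrt_mul_two_add_eq hc]
  generalize √(1 + 2 / c) = t, (Real.sqrt_nonneg _ : 0 ≤ √(1 + 2 / c)) = ht
  have hden : 1 + c + c * t ≠ 0 := by positivity
  rw [one_sub_div hden, show 1 + c + c * t - 1 = c * (1 + t) by ring]
  field_simp

lemma strictMonoOn_two_div_one_add_sqrt_one_add_two_div :
    StrictMonoOn (fun c : ℝ => 2 / (1 + √(1 + 2 / c))) (Ioi 0) := by
  intro x hx y hy hxy
  have h2div : 2 / y < 2 / x := div_lt_div_of_pos_left two_pos hx hxy
  have hsqrt : √(1 + 2 / y) < √(1 + 2 / x) :=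
    Real.sqrt_lt_sqrt (by positivity [mem_Ioi.mp hy]) (by linarith)
  exact div_lt_div_of_pos_left two_pos (by positivity) (by linarith)

theorem maximizer_and_max_throughput_strictAnti_general (R a : ℝ) (hR : 0 < R) :
    StrictAntiOn (fun c : ℝ => 1 / (1 + c + Real.sqrt (c * (2 + c)))) (Ioi 0) ∧
    StrictAntiOn (fun c : ℝ =>
      R * (1 / (1 + c + Real.sqrt (c * (2 + c)))) *
        Real.exp (-a - 2 * c * (1 / (1 + c + Real.sqrt (c * (2 + c)))) /
          (1 - 1 / (1 + c + Real.sqrt (c * (2 + c)))))) (Ioi 0) := by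
  have hΔ : StrictAntiOn optimalDuty (Ioi 0) := optimalDuty_strictAntiOn.mono Ioi_subset_Ici_self
  refine ⟨hΔ, fun x hx y hy hxy => ?_⟩
  change R * optimalDuty y * Real.exp (-a - 2 * y * optimalDuty y / (1 - optimalDuty y)) <
    R * optimalDuty x * Real.exp (-a - 2 * x * optimalDuty x / (1 - optimalDuty x))
  rw [two_mul_optimalDuty_div_one_sub hx, two_mul_optimalDuty_div_one_sub hy]
  have hexponent := strictMonoOn_two_div_one_add_sqrt_one_add_two_div hx hy hxy
  exact mul_lt_mul (mul_lt_mul_of_pos_left (hΔ hx hy hxy) hR)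
    (Real.exp_le_exp.mpr (by linarith)) (Real.exp_pos _) (mul_pos hR (optimalDuty_pos hx.le)).le

/-- With b = 2c, both the optimal duty cycle Δ*(c) = 1/(1 + c + √(c(2+c))) and the
    corresponding maximum throughput θ(Δ*(c)) are strictly decreasing in c > 0. -/
theorem maximizer_and_max_throughput_strictAnti (R a : ℝ) (hR : 0 < R) (ha : 0 ≤ a) :
    StrictAntiOn (fun c : ℝ => 1 / (1 + c + Real.sqrt (c * (2 + c)))) (Ioi 0) ∧
    StrictAntiOn (fun c : ℝ =>
      R * (1 / (1 + c + Real.sqrt (c * (2 + c)))) *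
        Real.exp (-a - 2 * c * (1 / (1 + c + Real.sqrt (c * (2 + c)))) /
          (1 - 1 / (1 + c + Real.sqrt (c * (2 + c)))))) (Ioi 0) :=
  maximizer_and_max_throughput_strictAnti_general R a hR
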